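/- arXiv:2409.02943 — 4 statements merged into one kernel-verified Lean document; each statement's English description precedes it below -/
import Mathlib

section
/- Let E be a finite set, ℓ ≥ 1 an integer, and g : 2^E → ℝ a monotone nondecreasing function with g(∅) = 0 and g(A) ≥ 0 for all A, having submodularity ratio at least γ ∈ (0,1]. Let w : E → ℝ≥0 and define the additive function l(A) = Σ_{e∈A} w(e). Let S ⊆ E × [ℓ] have pairwise distinct first coordinates, let OPT ⊆ E with |OPT| = |S|, and for each j ∈ [ℓ] let h_j : S → OPT be a bijection with h_j((u,k)) = u whenever u ∈ OPT. Define Φ_f(T) = Φ_g(T) + l(π_{[ℓ]}(T)). If S is a local maximum for the allowed swaps, i.e. Φ_f(S) ≥ Φ_f(S − (u,k) + (h_j((u,k)), j)) for every (u,k) ∈ S and every j ∈ [ℓ], then g(π_{[ℓ]}(S)) + l(π_{[ℓ]}(S)) ≥ (1 − (1 + γ³/ℓ)^{−ℓ})·g(OPT) + l(OPT). -/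
open Finset

/-- `π_J(S)`: first coordinates of pairs in `S` whose second coordinate lies in `J`. -/
def proj {E : Type*} [DecidableEq E] (S : Finset (E × ℕ)) (J : Finset ℕ) : Finset E :=
  (S.filter (fun p => p.2 ∈ J)).image Prod.fst

/-- `α_i = (1+c)^(i-1) / C(ℓ-1, i-1)`. -/
noncomputable def alphaCoef (ℓ : ℕ) (c : ℝ) (i : ℕ) : ℝ :=
  (1 + c) ^ (i - 1) / ((ℓ - 1).choose (i - 1) : ℝ)

/-- The potential `Φ_g(S) = (γ/ℓ)(1+γ³/ℓ)^{-ℓ} Σ_{∅≠J⊆[ℓ]} α_{|J|} g(π_J(S))`. -/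
noncomputable def Phi {E : Type*} [DecidableEq E] (ℓ : ℕ) (γ : ℝ) (g : Finset E → ℝ)
    (S : Finset (E × ℕ)) : ℝ :=
  (γ / ℓ) * (1 + γ ^ 3 / ℓ) ^ (-(ℓ : ℤ)) *
    ∑ J ∈ (Finset.Icc 1 ℓ).powerset.filter (fun J => J.Nonempty),
      alphaCoef ℓ (γ ^ 3 / ℓ) J.card * g (proj S J)

/-! Sum the local-optimality inequality over all `ℓ·|S|` allowed swaps. Write `A_J = π_J(S)`.
By the submodularity ratio, the total loss of removing single elements of `A_J` is at most
`γ⁻¹ Σ_{k∈J} (g(A_J) - g(A_{J-k}))`, and the total gain of the exchanges `h_j` (`j ∈ J`) is at least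
`|J| γ² (g(OPT) - g(A_J))`. The weights satisfy `(ℓ - i) α_{i+1} = (1 + c) i α_i`, so after
weighting by `α_{|J|}` the removal terms telescope over the subset lattice to `ℓ (1 + c)^ℓ g(A_{[ℓ]})`, while
`c Σ_J α_{|J|} |J| = ℓ ((1 + c)^ℓ - 1)` produces the factor `1 - (1 + c)^{-ℓ}`. -/

section Proj

variable {E : Type*} [DecidableEq E] {S : Finset (E × ℕ)} {J K : Finset ℕ}

lemma mem_proj {u : E} : u ∈ proj S J ↔ ∃ p ∈ S, p.2 ∈ J ∧ p.1 = u := by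
  simp [proj, and_assoc]

lemma proj_mono (h : J ⊆ K) : proj S J ⊆ proj S K :=
  image_subset_image (monotone_filter_right _ fun _ _ hp => h hp)

@[simp] lemma proj_empty : proj S ∅ = ∅ := by
  simp [proj]

lemma proj_insert (q : E × ℕ) :
    proj (insert q S) J = if q.2 ∈ J then insert q.1 (proj S J) else proj S J := by
  unfold proj
  rw [filter_insert]
  split_ifs <;> simp [image_insert]

lemma proj_eq_biUnion : proj S J = J.biUnion fun k => proj S {k} := by
  ext u
  simp only [mem_proj, mem_biUnion, mem_singleton]
  aesop

lemma proj_eq_image_fst (hS : ∀ p ∈ S, p.2 ∈ J) : proj S J = S.image Prod.fst := by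
  rw [proj, filter_true_of_mem hS]

lemma fst_mem_proj_iff (hinj : Set.InjOn Prod.fst (S : Set (E × ℕ))) {p : E × ℕ} (hp : p ∈ S) :
    p.1 ∈ proj S J ↔ p.2 ∈ J := by
  refine ⟨fun h => ?_, fun h => mem_proj.2 ⟨p, hp, h, rfl⟩⟩
  obtain ⟨q, hq, hqJ, hqp⟩ := mem_proj.1 h
  rwa [← hinj hq hp hqp]

lemma proj_sdiff (hinj : Set.InjOn Prod.fst (S : Set (E × ℕ))) :
    proj S J \ proj S K = proj S (J \ K) := by
  ext u
  simp only [mem_sdiff, mem_proj]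
  constructor
  · rintro ⟨⟨p, hp, hpJ, rfl⟩, hK⟩
    exact ⟨p, hp, ⟨hpJ, fun hpK => hK ⟨p, hp, hpK, rfl⟩⟩, rfl⟩
  · rintro ⟨p, hp, ⟨hpJ, hpK⟩, rfl⟩
    refine ⟨⟨p, hp, hpJ, rfl⟩, ?_⟩
    rintro ⟨q, hq, hqK, hqp⟩
    exact hpK (hinj hq hp hqp ▸ hqK)

lemma disjoint_proj (hinj : Set.InjOn Prod.fst (S : Set (E × ℕ))) (h : Disjoint J K) :
    Disjoint (proj S J) (proj S K) := by
  rw [← Finset.sdiff_eq_self_iff_disjoint, proj_sdiff hinj, h.sdiff_eq_left]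

lemma proj_erase (hinj : Set.InjOn Prod.fst (S : Set (E × ℕ))) {p : E × ℕ} (hp : p ∈ S) :
    proj (S.erase p) J = (proj S J).erase p.1 := by
  ext u
  simp only [mem_erase, mem_proj]
  constructor
  · rintro ⟨q, ⟨hqp, hq⟩, hqJ, rfl⟩
    exact ⟨fun h => hqp (hinj hq hp h), q, hq, hqJ, rfl⟩
  · rintro ⟨hup, q, hq, hqJ, rfl⟩
    exact ⟨q, ⟨fun h => hup (h ▸ rfl), hq⟩, hqJ, rfl⟩

end Proj

section SubmodularityRatio

variable {α : Type*} [DecidableEq α]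

def SubmodularityRatioAtLeast (g : Finset α → ℝ) (γ : ℝ) : Prop :=
  ∀ T A : Finset α, T ⊆ A → ∀ e ∉ A, g (insert e T) - g T ≥ γ * (g (insert e A) - g A)

variable {g : Finset α → ℝ} {γ : ℝ}

lemma SubmodularityRatioAtLeast.mul_union_sub_le_sum_gain (hγ : SubmodularityRatioAtLeast g γ)
    (hmono : Monotone g) (B X : Finset α) :
    γ * (g (X ∪ B) - g X) ≤ ∑ o ∈ B, (g (insert o X) - g X) := by
  induction B using Finset.induction with
  | empty => simp
  | @insert b B hb ih =>
    rw [sum_insert hb]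
    have hstep : γ * (g (X ∪ insert b B) - g (X ∪ B)) ≤ g (insert b X) - g X := by
      rw [union_insert]
      by_cases hbXB : b ∈ X ∪ B
      · rw [insert_eq_of_mem hbXB, sub_self, mul_zero, sub_nonneg]
        exact hmono (subset_insert b X)
      · exact hγ X (X ∪ B) subset_union_left b hbXB
    linarith

lemma SubmodularityRatioAtLeast.mul_sum_loss_le (hγ : SubmodularityRatioAtLeast g γ)
    {B U : Finset α} (hBU : B ⊆ U) :
    γ * ∑ u ∈ B, (g U - g (U.erase u)) ≤ g U - g (U \ B) := by
  induction B using Finset.induction with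
  | empty => simp
  | @insert b B hb ih =>
    have hbU : b ∈ U := hBU (mem_insert_self b B)
    have hstep : γ * (g U - g (U.erase b)) ≤ g (U \ B) - g (U \ insert b B) := by
      have key :=
        hγ _ _ (erase_subset_erase b (sdiff_subset (s := U) (t := B))) b (notMem_erase b U)
      rwa [insert_erase (mem_sdiff.2 ⟨hbU, hb⟩), insert_erase hbU, ← sdiff_insert] at key
    rw [sum_insert hb, mul_add]
    linarith [ih ((subset_insert b B).trans hBU)]

lemma SubmodularityRatioAtLeast.mul_gain_le_gain_erase (hγ : SubmodularityRatioAtLeast g γ)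
    (hmono : Monotone g) {A : Finset α} {e u : α} (he : e ∈ A → e = u) :
    γ * (g (insert e A) - g A) ≤ g (insert e (A.erase u)) - g (A.erase u) := by
  by_cases heA : e ∈ A
  · obtain rfl := he heA
    rw [insert_eq_of_mem heA, insert_erase heA, sub_self, mul_zero, sub_nonneg]
    exact hmono (erase_subset e A)
  · exact hγ _ _ (erase_subset u A) e heA

end SubmodularityRatio

lemma sum_comp_of_bijOn {ι κ M : Type*} [AddCommMonoid M] {s : Finset ι} {t : Finset κ} {σ : ι → κ}
    (hσ : Set.BijOn σ s t) (f : κ → M) : ∑ i ∈ s, f (σ i) = ∑ k ∈ t, f k :=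
  sum_nbij σ (fun _ hi => hσ.mapsTo hi) hσ.injOn hσ.surjOn fun _ _ => rfl

section Exchange

variable {E : Type*} [DecidableEq E] {S : Finset (E × ℕ)} {g : Finset E → ℝ} {γ : ℝ}

lemma SubmodularityRatioAtLeast.mul_sum_loss_proj_le (hγ : SubmodularityRatioAtLeast g γ)
    (hinj : Set.InjOn Prod.fst (S : Set (E × ℕ))) (J : Finset ℕ) :
    γ * ∑ p ∈ S, (g (proj S J) - g ((proj S J).erase p.1)) ≤
      ∑ k ∈ J, (g (proj S J) - g (proj S (J.erase k))) := by
  set U := proj S J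
  have hU : ∑ p ∈ S, (g U - g (U.erase p.1)) = ∑ u ∈ U, (g U - g (U.erase u)) := by
    rw [← sum_image (f := fun u => g U - g (U.erase u)) fun p hp q hq => hinj hp hq]
    refine (sum_subset (image_subset_image (filter_subset _ S)) fun u _ (hu : u ∉ U) => ?_).symm
    rw [erase_eq_of_notMem hu, sub_self]
  have hdisj : (J : Set ℕ).PairwiseDisjoint fun k => proj S {k} := fun k _ k' _ hkk' =>
    disjoint_proj hinj (disjoint_singleton.2 hkk')
  have hfibres := sum_biUnion (f := fun u => g U - g (U.erase u)) hdisj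
  rw [← proj_eq_biUnion] at hfibres
  rw [hU, hfibres, mul_sum]
  refine sum_le_sum fun k hk => ?_
  rw [← sdiff_singleton_eq_erase, ← proj_sdiff hinj]
  exact hγ.mul_sum_loss_le (proj_mono (singleton_subset_iff.2 hk))

variable {OPT : Finset E} {σ : E × ℕ → E}

lemma eq_fst_of_mem_proj (hσ : Set.BijOn σ S OPT) (hfix : ∀ p ∈ S, p.1 ∈ OPT → σ p = p.1)
    {p : E × ℕ} (hp : p ∈ S) {J : Finset ℕ} (h : σ p ∈ proj S J) : σ p = p.1 := by
  obtain ⟨q, hq, -, hqp⟩ := mem_proj.1 h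
  have hσq : σ q = q.1 := hfix q hq (hqp ▸ hσ.mapsTo hp)
  obtain rfl : q = p := hσ.injOn hq hp (hσq.trans hqp)
  exact hqp.symm

lemma SubmodularityRatioAtLeast.sq_mul_sub_le_sum_gain_exchange (hγ : SubmodularityRatioAtLeast g γ)
    (hγ0 : 0 ≤ γ) (hmono : Monotone g) (hσ : Set.BijOn σ S OPT)
    (hfix : ∀ p ∈ S, p.1 ∈ OPT → σ p = p.1) (J : Finset ℕ) :
    γ ^ 2 * (g OPT - g (proj S J)) ≤
      ∑ p ∈ S, (g (insert (σ p) ((proj S J).erase p.1)) - g ((proj S J).erase p.1)) := by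
  set U := proj S J
  calc γ ^ 2 * (g OPT - g U) ≤ γ * (γ * (g (U ∪ OPT) - g U)) := by
        rw [← mul_assoc, ← sq]
        gcongr
        exact hmono subset_union_right
    _ ≤ γ * ∑ o ∈ OPT, (g (insert o U) - g U) :=
        mul_le_mul_of_nonneg_left (hγ.mul_union_sub_le_sum_gain hmono OPT U) hγ0
    _ = ∑ p ∈ S, γ * (g (insert (σ p) U) - g U) := by
        rw [mul_sum, sum_comp_of_bijOn hσ fun o => γ * (g (insert o U) - g U)]
    _ ≤ _ := sum_le_sum fun p hp => hγ.mul_gain_le_gain_erase hmono (eq_fst_of_mem_proj hσ hfix hp)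

end Exchange

section Coefficients

variable {ι : Type*} {L : Finset ι} {ℓ : ℕ} {c : ℝ}

lemma alphaCoef_nonneg (hc : 0 ≤ 1 + c) (ℓ i : ℕ) : 0 ≤ alphaCoef ℓ c i := by
  unfold alphaCoef
  positivity

lemma alphaCoef_succ {i : ℕ} (hi : 1 ≤ i) (hiℓ : i < ℓ) :
    ((ℓ - i : ℕ) : ℝ) * alphaCoef ℓ c (i + 1) = (1 + c) * i * alphaCoef ℓ c i := by
  obtain ⟨m, rfl⟩ := Nat.exists_eq_add_of_le' hi
  obtain ⟨n, rfl⟩ := Nat.exists_eq_add_of_lt hiℓ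
  have hchoose : ((m + n + 1).choose (m + 1) : ℝ) * (m + 1) = (m + n + 1).choose m * (n + 1) := by
    exact_mod_cast (Nat.choose_succ_right_eq (m + n + 1) m).trans (by congr 1; omega)
  have h0 : ((m + n + 1).choose m : ℝ) ≠ 0 := by
    exact_mod_cast (Nat.choose_pos (by omega)).ne'
  have h1 : ((m + n + 1).choose (m + 1) : ℝ) ≠ 0 := by
    exact_mod_cast (Nat.choose_pos (by omega)).ne'
  simp only [alphaCoef, show m + 1 + n + 1 - 1 = m + n + 1 by omega, Nat.add_sub_cancel,
    show m + 1 + n + 1 - (m + 1) = n + 1 by omega]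
  field_simp
  push_cast
  linear_combination -(1 + c) * (1 + c) ^ m * hchoose

lemma sum_powerset_sum_mem_eq [DecidableEq ι] {M : Type*} [AddCommMonoid M]
    (f : Finset ι → ι → M) :
    ∑ J ∈ L.powerset, ∑ k ∈ J, f J k = ∑ K ∈ L.powerset, ∑ k ∈ L \ K, f (insert k K) k := by
  rw [sum_sigma', sum_sigma']
  refine sum_nbij' (fun x => ⟨x.1.erase x.2, x.2⟩) (fun x => ⟨insert x.2 x.1, x.2⟩) ?_ ?_ ?_ ?_ ?_
  · simp only [mem_sigma, mem_powerset, mem_sdiff, notMem_erase, not_false_eq_true, and_true]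
    exact fun x hx => ⟨(erase_subset _ _).trans hx.1, hx.1 hx.2⟩
  · simp only [mem_sigma, mem_powerset, mem_sdiff, mem_insert_self, and_true]
    exact fun x hx => insert_subset hx.2.1 hx.1
  · simp only [mem_sigma]
    exact fun x hx => by rw [insert_erase hx.2]
  · simp only [mem_sigma, mem_sdiff]
    exact fun x hx => by rw [erase_insert hx.2.2]
  · simp only [mem_sigma]
    exact fun x hx => by rw [insert_erase hx.2]

lemma sum_powerset_alphaCoef_mul_sub [DecidableEq ι] (hL : #L = ℓ) (F : Finset ι → ℝ)
    (hF : F ∅ = 0) :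
    ∑ J ∈ L.powerset, alphaCoef ℓ c #J * ((1 + c) * #J * F J - ∑ k ∈ J, F (J.erase k)) =
      ℓ * (1 + c) ^ ℓ * F L := by
  have hremove : ∑ J ∈ L.powerset, alphaCoef ℓ c #J * ∑ k ∈ J, F (J.erase k) =
      ∑ K ∈ L.powerset, ((ℓ - #K : ℕ) : ℝ) * alphaCoef ℓ c (#K + 1) * F K := by
    simp_rw [mul_sum]
    rw [sum_powerset_sum_mem_eq]
    refine sum_congr rfl fun K hK => ?_
    rw [show ℓ - #K = #(L \ K) by rw [card_sdiff_of_subset (mem_powerset.1 hK), hL],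
      mul_assoc, ← nsmul_eq_mul, ← sum_const]
    refine sum_congr rfl fun k hk => ?_
    rw [card_insert_of_notMem (mem_sdiff.1 hk).2, erase_insert (mem_sdiff.1 hk).2]
  simp_rw [mul_sub, sum_sub_distrib, hremove, ← sum_sub_distrib]
  rw [sum_eq_single_of_mem L (mem_powerset_self L)]
  · rcases ℓ with _ | ℓ
    · simp [card_eq_zero.1 hL]
    rw [hL, Nat.sub_self, alphaCoef, Nat.add_sub_cancel, Nat.choose_self]
    push_cast
    ring
  · intro K hK hKL
    obtain rfl | hKne := K.eq_empty_or_nonempty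
    · simp [hF]
    have hKℓ : #K < ℓ := hL ▸ card_lt_card (ssubset_of_subset_of_ne (mem_powerset.1 hK) hKL)
    rw [alphaCoef_succ hKne.card_pos hKℓ]
    ring

lemma mul_sum_powerset_alphaCoef_mul_card (hL : #L = ℓ) :
    c * ∑ J ∈ L.powerset, alphaCoef ℓ c #J * #J = ℓ * ((1 + c) ^ ℓ - 1) := by
  have hterm : ∀ m ∈ range ℓ,
      ℓ.choose (m + 1) • (alphaCoef ℓ c (m + 1) * ((m + 1 : ℕ) : ℝ)) = ℓ * (1 + c) ^ m := by
    intro m hm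
    obtain ⟨n, rfl⟩ := Nat.exists_eq_add_of_lt (mem_range.1 hm)
    have hchoose :
        ((m + n + 1 : ℕ) : ℝ) * (m + n).choose m = (m + n + 1).choose (m + 1) * (m + 1) := by
      exact_mod_cast Nat.add_one_mul_choose_eq (m + n) m
    have h0 : ((m + n).choose m : ℝ) ≠ 0 := by exact_mod_cast (Nat.choose_pos (by omega)).ne'
    simp only [alphaCoef, nsmul_eq_mul, Nat.add_sub_cancel]
    field_simp
    push_cast at hchoose ⊢
    linear_combination -(1 + c) ^ m * hchoose
  rw [sum_powerset_apply_card (fun m => alphaCoef ℓ c m * (m : ℝ)), hL, sum_range_succ',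
    sum_congr rfl hterm, ← mul_sum, ← geom_sum_mul]
  simp only [Nat.cast_zero, mul_zero, smul_zero, add_zero, add_sub_cancel_left]
  ring

-- `F J`, `R J` and `M J` play the roles of `g (π_J S)`, of the total loss of removing single
-- elements of `π_J S`, and of the total gain of the exchanges `h_j` with `j ∈ J`.
lemma potential_bound [DecidableEq ι] (hL : #L = ℓ) (hℓ : 1 ≤ ℓ) {γ : ℝ} (hγ : 0 < γ)
    {F R M : Finset ι → ℝ} {x : ℝ} (hF : F ∅ = 0)
    (hR : ∀ J ⊆ L, γ * R J ≤ #J * F J - ∑ k ∈ J, F (J.erase k))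
    (hM : ∀ J ⊆ L, #J * (γ ^ 2 * (x - F J)) ≤ M J) :
    γ / ℓ * (1 + γ ^ 3 / ℓ) ^ (-(ℓ : ℤ)) *
        ∑ J ∈ L.powerset, alphaCoef ℓ (γ ^ 3 / ℓ) #J * (ℓ * R J - M J) ≤
      ℓ * (F L - (1 - (1 + γ ^ 3 / ℓ) ^ (-(ℓ : ℤ))) * x) := by
  set c := γ ^ 3 / ℓ with hc
  have hℓ0 : (0 : ℝ) < ℓ := by exact_mod_cast hℓ
  have hc0 : 0 ≤ c := by positivity
  have hper : ∀ J ∈ L.powerset, alphaCoef ℓ c #J * (ℓ * R J - M J) ≤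
      ℓ / γ * (alphaCoef ℓ c #J * ((1 + c) * #J * F J - ∑ k ∈ J, F (J.erase k))) -
        γ ^ 2 * x * (alphaCoef ℓ c #J * #J) := by
    intro J hJ
    have hRJ : ℓ * R J ≤ ℓ / γ * (#J * F J - ∑ k ∈ J, F (J.erase k)) := by
      rw [div_mul_eq_mul_div, le_div_iff₀ hγ, mul_right_comm, mul_assoc]
      exact mul_le_mul_of_nonneg_left (hR J (mem_powerset.1 hJ)) hℓ0.le
    calc alphaCoef ℓ c #J * (ℓ * R J - M J)
        ≤ alphaCoef ℓ c #J * (ℓ / γ * (#J * F J - ∑ k ∈ J, F (J.erase k)) -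
            #J * (γ ^ 2 * (x - F J))) := by
          gcongr
          · exact alphaCoef_nonneg (by linarith) ℓ #J
          · exact hM J (mem_powerset.1 hJ)
      _ = _ := by
          rw [hc]
          field_simp
          ring
  calc γ / ℓ * (1 + c) ^ (-(ℓ : ℤ)) * ∑ J ∈ L.powerset, alphaCoef ℓ c #J * (ℓ * R J - M J)
      ≤ γ / ℓ * (1 + c) ^ (-(ℓ : ℤ)) *
          (ℓ / γ * (ℓ * (1 + c) ^ ℓ * F L) -
            γ ^ 2 * x * ∑ J ∈ L.powerset, alphaCoef ℓ c #J * #J) := by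
        refine mul_le_mul_of_nonneg_left ((sum_le_sum hper).trans_eq ?_) (by positivity)
        rw [sum_sub_distrib, ← mul_sum, ← mul_sum, sum_powerset_alphaCoef_mul_sub hL F hF]
    _ = ℓ * (F L - (1 - (1 + c) ^ (-(ℓ : ℤ))) * x) := by
        have hsum := mul_sum_powerset_alphaCoef_mul_card (c := c) hL
        have hγ3 : γ ^ 3 = c * ℓ := by rw [hc]; field_simp
        rw [zpow_neg, zpow_natCast]
        have hP : (1 + c) ^ ℓ ≠ 0 := by positivity
        generalize (1 + c) ^ ℓ = P at hsum hP ⊢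
        generalize ∑ J ∈ L.powerset, alphaCoef ℓ c #J * #J = s at hsum ⊢
        field_simp
        linear_combination (-x * s) * hγ3 - ℓ * x * hsum

end Coefficients

lemma sum_sum_sum_powerset_sub_ite {α κ : Type*} [DecidableEq κ] (P : Finset α) (L : Finset κ)
    (a : Finset κ → ℝ) (D : Finset κ → α → ℝ) (G : Finset κ → α → κ → ℝ) :
    ∑ p ∈ P, ∑ j ∈ L, ∑ J ∈ L.powerset, a J * (D J p - if j ∈ J then G J p j else 0) =
      ∑ J ∈ L.powerset, a J * (#L * ∑ p ∈ P, D J p - ∑ j ∈ J, ∑ p ∈ P, G J p j) := by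
  simp_rw [sum_comm (s := L), sum_comm (s := P)]
  refine sum_congr rfl fun J hJ => ?_
  simp only [mul_sub, sum_sub_distrib, sum_ite_irrel, sum_const_zero, sum_ite_mem,
    inter_eq_right.2 (mem_powerset.1 hJ), sum_const, nsmul_eq_mul, ← mul_sum]
  ring

section Potential

variable {E : Type*} [DecidableEq E] {g : Finset E → ℝ} {ℓ : ℕ} {γ : ℝ}

lemma Phi_eq_sum_powerset (hg : g ∅ = 0) (T : Finset (E × ℕ)) :
    Phi ℓ γ g T = γ / ℓ * (1 + γ ^ 3 / ℓ) ^ (-(ℓ : ℤ)) *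
      ∑ J ∈ (Icc 1 ℓ).powerset, alphaCoef ℓ (γ ^ 3 / ℓ) #J * g (proj T J) := by
  rw [Phi, sum_filter_of_ne]
  rintro J - hJ
  rw [nonempty_iff_ne_empty]
  rintro rfl
  simp [hg] at hJ

lemma Phi_sub_Phi_swap (hg : g ∅ = 0) {S : Finset (E × ℕ)}
    (hinj : Set.InjOn Prod.fst (S : Set (E × ℕ))) {p : E × ℕ} (hp : p ∈ S) (e : E) (j : ℕ) :
    Phi ℓ γ g S - Phi ℓ γ g (insert (e, j) (S.erase p)) =
      γ / ℓ * (1 + γ ^ 3 / ℓ) ^ (-(ℓ : ℤ)) * ∑ J ∈ (Icc 1 ℓ).powerset, alphaCoef ℓ (γ ^ 3 / ℓ) #J *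
        (g (proj S J) - g ((proj S J).erase p.1) -
          if j ∈ J then g (insert e ((proj S J).erase p.1)) - g ((proj S J).erase p.1) else 0) := by
  rw [Phi_eq_sum_powerset hg, Phi_eq_sum_powerset hg, ← mul_sub, ← sum_sub_distrib]
  congr 1
  refine sum_congr rfl fun J _ => ?_
  rw [proj_insert, proj_erase hinj hp]
  split_ifs <;> ring

lemma potential_gap_swap (hg : g ∅ = 0) {S : Finset (E × ℕ)}
    (hinj : Set.InjOn Prod.fst (S : Set (E × ℕ))) {p : E × ℕ} (hp : p ∈ S) (hpL : p.2 ∈ Icc 1 ℓ)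
    {e : E} {j : ℕ} (hj : j ∈ Icc 1 ℓ) (he : e ∉ (proj S (Icc 1 ℓ)).erase p.1) (w : E → ℝ) :
    (Phi ℓ γ g S + ∑ u ∈ proj S (Icc 1 ℓ), w u) -
        (Phi ℓ γ g (insert (e, j) (S.erase p)) +
          ∑ u ∈ proj (insert (e, j) (S.erase p)) (Icc 1 ℓ), w u) =
      γ / ℓ * (1 + γ ^ 3 / ℓ) ^ (-(ℓ : ℤ)) * ∑ J ∈ (Icc 1 ℓ).powerset, alphaCoef ℓ (γ ^ 3 / ℓ) #J *
        (g (proj S J) - g ((proj S J).erase p.1) -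
          if j ∈ J then g (insert e ((proj S J).erase p.1)) - g ((proj S J).erase p.1) else 0) +
        (w p.1 - w e) := by
  rw [← Phi_sub_Phi_swap hg hinj hp, proj_insert, if_pos hj, proj_erase hinj hp, sum_insert he,
    sum_erase_eq_sub ((fst_mem_proj_iff hinj hp).2 hpL)]
  ring

lemma sum_sum_potential_gap_swap (hg : g ∅ = 0) {S : Finset (E × ℕ)}
    (hinj : Set.InjOn Prod.fst (S : Set (E × ℕ))) (hS : ∀ p ∈ S, p.2 ∈ Icc 1 ℓ)
    {OPT : Finset E} {h : ℕ → E × ℕ → E} (hbij : ∀ j ∈ Icc 1 ℓ, Set.BijOn (h j) S OPT)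
    (hfix : ∀ j ∈ Icc 1 ℓ, ∀ p ∈ S, p.1 ∈ OPT → h j p = p.1) (w : E → ℝ) :
    ∑ p ∈ S, ∑ j ∈ Icc 1 ℓ, ((Phi ℓ γ g S + ∑ u ∈ proj S (Icc 1 ℓ), w u) -
        (Phi ℓ γ g (insert (h j p, j) (S.erase p)) +
          ∑ u ∈ proj (insert (h j p, j) (S.erase p)) (Icc 1 ℓ), w u)) =
      γ / ℓ * (1 + γ ^ 3 / ℓ) ^ (-(ℓ : ℤ)) * ∑ J ∈ (Icc 1 ℓ).powerset, alphaCoef ℓ (γ ^ 3 / ℓ) #J *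
        (ℓ * ∑ p ∈ S, (g (proj S J) - g ((proj S J).erase p.1)) -
          ∑ j ∈ J, ∑ p ∈ S,
            (g (insert (h j p) ((proj S J).erase p.1)) - g ((proj S J).erase p.1))) +
        ℓ * (∑ u ∈ proj S (Icc 1 ℓ), w u - ∑ o ∈ OPT, w o) := by
  have hL : #(Icc 1 ℓ) = ℓ := by simp
  have hnew : ∀ j ∈ Icc 1 ℓ, ∀ p ∈ S, h j p ∉ (proj S (Icc 1 ℓ)).erase p.1 :=
    fun j hj p hp hmem => notMem_erase p.1 _
      (eq_fst_of_mem_proj (hbij j hj) (hfix j hj) hp (mem_of_mem_erase hmem) ▸ hmem)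
  have hlin : ∑ p ∈ S, ∑ j ∈ Icc 1 ℓ, (w p.1 - w (h j p)) =
      ℓ * (∑ u ∈ proj S (Icc 1 ℓ), w u - ∑ o ∈ OPT, w o) := by
    rw [sum_comm, sum_congr rfl fun j hj => by rw [sum_sub_distrib, sum_comp_of_bijOn (hbij j hj)],
      sum_const, hL, nsmul_eq_mul, proj_eq_image_fst hS, sum_image fun p hp q hq => hinj hp hq]
  rw [sum_congr rfl fun p hp => sum_congr rfl fun j hj =>
      potential_gap_swap hg hinj hp (hS p hp) hj (hnew j hj p hp) w]
  simp only [sum_add_distrib, ← mul_sum]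
  rw [sum_sum_sum_powerset_sub_ite, hL, hlin]

end Potential

theorem stmt_1_general {E : Type*} [DecidableEq E] (ℓ : ℕ) (hℓ : 1 ≤ ℓ)
    (g : Finset E → ℝ) (γ : ℝ) (hγ0 : 0 < γ)
    (hmono : ∀ A B : Finset E, A ⊆ B → g A ≤ g B)
    (hempty : g ∅ = 0)
    (hratio : ∀ T A : Finset E, T ⊆ A → ∀ e ∉ A,
      g (insert e T) - g T ≥ γ * (g (insert e A) - g A))
    (w : E → ℝ)
    (l : Finset E → ℝ) (hl : ∀ A : Finset E, l A = ∑ e ∈ A, w e)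
    (S : Finset (E × ℕ)) (hS : ∀ p ∈ S, p.2 ∈ Finset.Icc 1 ℓ)
    (hdist : ∀ p ∈ S, ∀ q ∈ S, p.1 = q.1 → p = q)
    (OPT : Finset E)
    (h : ℕ → E × ℕ → E)
    (hbij : ∀ j ∈ Finset.Icc 1 ℓ, Set.BijOn (h j) ↑S ↑OPT)
    (hfix : ∀ j ∈ Finset.Icc 1 ℓ, ∀ p ∈ S, p.1 ∈ OPT → h j p = p.1)
    (Φf : Finset (E × ℕ) → ℝ)
    (hΦf : ∀ T : Finset (E × ℕ), Φf T = Phi ℓ γ g T + l (proj T (Finset.Icc 1 ℓ)))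
    (hlocal : ∀ p ∈ S, ∀ j ∈ Finset.Icc 1 ℓ,
      Φf S ≥ Φf (insert (h j p, j) (S.erase p))) :
    g (proj S (Finset.Icc 1 ℓ)) + l (proj S (Finset.Icc 1 ℓ)) ≥
      (1 - (1 + γ ^ 3 / ℓ) ^ (-(ℓ : ℤ))) * g OPT + l OPT := by
  have hinj : Set.InjOn Prod.fst (S : Set (E × ℕ)) := fun p hp q hq => hdist p hp q hq
  have hγ : SubmodularityRatioAtLeast g γ := hratio
  have htotal := sum_nonneg fun p hp => sum_nonneg fun j hj => sub_nonneg.2 (hlocal p hp j hj)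
  simp only [hΦf, hl] at htotal
  rw [sum_sum_potential_gap_swap hempty hinj hS hbij hfix w] at htotal
  have hbound := potential_bound (by simp : #(Icc 1 ℓ) = ℓ) hℓ hγ0
    (F := fun J => g (proj S J)) (x := g OPT)
    (R := fun J => ∑ p ∈ S, (g (proj S J) - g ((proj S J).erase p.1)))
    (M := fun J => ∑ j ∈ J, ∑ p ∈ S,
      (g (insert (h j p) ((proj S J).erase p.1)) - g ((proj S J).erase p.1)))
    (by simp [hempty])
    (fun J _ => by simpa [sum_sub_distrib] using hγ.mul_sum_loss_proj_le hinj J)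
    (fun J hJ => by
      simpa using card_nsmul_le_sum J _ _ fun j hj => hγ.sq_mul_sub_le_sum_gain_exchange hγ0.le
        (fun A B => hmono A B) (hbij j (hJ hj)) (hfix j (hJ hj)) J)
  rw [hl, hl, ge_iff_le, ← sub_nonneg]
  refine nonneg_of_mul_nonneg_right (a := (ℓ : ℝ)) ?_ (by positivity)
  linarith

theorem stmt_1 {E : Type*} [Fintype E] [DecidableEq E] (ℓ : ℕ) (hℓ : 1 ≤ ℓ)
    (g : Finset E → ℝ) (γ : ℝ) (hγ0 : 0 < γ) (hγ1 : γ ≤ 1)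
    (hmono : ∀ A B : Finset E, A ⊆ B → g A ≤ g B)
    (hempty : g ∅ = 0) (hnonneg : ∀ A : Finset E, 0 ≤ g A)
    (hratio : ∀ T A : Finset E, T ⊆ A → ∀ e ∉ A,
      g (insert e T) - g T ≥ γ * (g (insert e A) - g A))
    (w : E → ℝ) (hw : ∀ e, 0 ≤ w e)
    (l : Finset E → ℝ) (hl : ∀ A : Finset E, l A = ∑ e ∈ A, w e)
    (S : Finset (E × ℕ)) (hS : ∀ p ∈ S, p.2 ∈ Finset.Icc 1 ℓ)
    (hdist : ∀ p ∈ S, ∀ q ∈ S, p.1 = q.1 → p = q)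
    (OPT : Finset E) (hcard : OPT.card = S.card)
    (h : ℕ → E × ℕ → E)
    (hbij : ∀ j ∈ Finset.Icc 1 ℓ, Set.BijOn (h j) ↑S ↑OPT)
    (hfix : ∀ j ∈ Finset.Icc 1 ℓ, ∀ p ∈ S, p.1 ∈ OPT → h j p = p.1)
    (Φf : Finset (E × ℕ) → ℝ)
    (hΦf : ∀ T : Finset (E × ℕ), Φf T = Phi ℓ γ g T + l (proj T (Finset.Icc 1 ℓ)))
    (hlocal : ∀ p ∈ S, ∀ j ∈ Finset.Icc 1 ℓ,
      Φf S ≥ Φf (insert (h j p, j) (S.erase p))) :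
    g (proj S (Finset.Icc 1 ℓ)) + l (proj S (Finset.Icc 1 ℓ)) ≥
      (1 - (1 + γ ^ 3 / ℓ) ^ (-(ℓ : ℤ))) * g OPT + l OPT :=
  stmt_1_general ℓ hℓ g γ hγ0 hmono hempty hratio w l hl S hS hdist OPT h hbij hfix Φf hΦf hlocal
end

section
/- Let E be a finite set, ℓ ≥ 1, and w : E → ℝ, with additive function l(A) = Σ_{e∈A} w(e). Let S ⊆ E × [ℓ] be a finite set whose elements have pairwise distinct first coordinates, let OPT ⊆ E with |OPT| = |S|, let h : S → OPT be a bijection such that h((u,k)) = u whenever u ∈ OPT, and fix j ∈ [ℓ]. Then Σ_{(u,k)∈S} l(π_{[ℓ]}(S − (u,k) + (h((u,k)), j))) = (|S| − 1)·l(π_{[ℓ]}(S)) + l(OPT); equivalently, l(π_{[ℓ]}(S)) = l(OPT) + |S|·l(π_{[ℓ]}(S)) − Σ_{(u,k)∈S} l(π_{[ℓ]}(S − (u,k) + (h((u,k)), j))). -/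
open Finset

theorem stmt_2 {E : Type*} [Fintype E] [DecidableEq E] (ℓ : ℕ) (hℓ : 1 ≤ ℓ)
    (w : E → ℝ) (l : Finset E → ℝ) (hl : ∀ A : Finset E, l A = ∑ e ∈ A, w e)
    (S : Finset (E × ℕ)) (hS : ∀ p ∈ S, p.2 ∈ Finset.Icc 1 ℓ)
    (hdist : ∀ p ∈ S, ∀ q ∈ S, p.1 = q.1 → p = q)
    (OPT : Finset E) (hcard : OPT.card = S.card)
    (h : E × ℕ → E) (hbij : Set.BijOn h ↑S ↑OPT)
    (hfix : ∀ p ∈ S, p.1 ∈ OPT → h p = p.1)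
    (j : ℕ) (hj : j ∈ Finset.Icc 1 ℓ) :
    (∑ p ∈ S, l (proj (insert (h p, j) (S.erase p)) (Finset.Icc 1 ℓ)) =
      ((S.card : ℝ) - 1) * l (proj S (Finset.Icc 1 ℓ)) + l OPT) ∧
    (l (proj S (Finset.Icc 1 ℓ)) =
      l OPT + (S.card : ℝ) * l (proj S (Finset.Icc 1 ℓ)) -
        ∑ p ∈ S, l (proj (insert (h p, j) (S.erase p)) (Finset.Icc 1 ℓ))) := by
  set T : Finset E := S.image Prod.fst with hTdef
  have hT : proj S (Finset.Icc 1 ℓ) = T := by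
    unfold proj
    rw [Finset.filter_true_of_mem hS]
  have hsum1 : ∑ p ∈ S, w p.1 = l T := by
    rw [hl, Finset.sum_image]
    intro p hp q hq hpq
    exact hdist p hp q hq hpq
  have hsum2 : ∑ p ∈ S, w (h p) = l OPT := by
    rw [hl]
    exact Finset.sum_bij (fun p _ => h p)
      (fun p hp => hbij.mapsTo hp)
      (fun p hp q hq => hbij.injOn hp hq)
      (fun b hb => by
        obtain ⟨p, hp, hpb⟩ := hbij.surjOn hb
        exact ⟨p, hp, hpb⟩)
      (fun p _ => rfl)
  have key : ∀ p ∈ S, l (proj (insert (h p, j) (S.erase p)) (Finset.Icc 1 ℓ))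
      = l T - w p.1 + w (h p) := by
    intro p hp
    have hproj : proj (insert (h p, j) (S.erase p)) (Finset.Icc 1 ℓ)
        = insert (h p) (T.erase p.1) := by
      unfold proj
      rw [Finset.filter_insert, if_pos hj,
        Finset.filter_true_of_mem (fun q hq => hS q (Finset.mem_of_mem_erase hq)),
        Finset.image_insert]
      congr 1
      ext a
      simp only [Finset.mem_image, Finset.mem_erase, hTdef]
      constructor
      · rintro ⟨q, ⟨hqp, hq⟩, rfl⟩
        refine ⟨fun hq1 => hqp (hdist q hq p hp hq1), q, hq, rfl⟩
      · rintro ⟨ha, q, hq, rfl⟩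
        exact ⟨q, ⟨fun hqp => ha (by rw [hqp]), hq⟩, rfl⟩
    have hp1T : p.1 ∈ T := Finset.mem_image_of_mem _ hp
    have hnot : h p ∉ T.erase p.1 := by
      intro hmem
      obtain ⟨hne, q, hq, hq1⟩ := by
        simpa only [Finset.mem_erase, Finset.mem_image, hTdef] using hmem
      have hqOPT : q.1 ∈ OPT := by
        rw [hq1]; exact hbij.mapsTo hp
      have : h q = h p := by rw [hfix q hq hqOPT, hq1]
      have := hbij.injOn hq hp this
      exact hne (by rw [← hq1, this])
    rw [hproj, hl, Finset.sum_insert hnot, Finset.sum_erase_eq_sub hp1T, ← hl]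
    ring
  have hfirst : ∑ p ∈ S, l (proj (insert (h p, j) (S.erase p)) (Finset.Icc 1 ℓ))
      = ((S.card : ℝ) - 1) * l (proj S (Finset.Icc 1 ℓ)) + l OPT := by
    rw [Finset.sum_congr rfl key, hT]
    rw [Finset.sum_add_distrib, Finset.sum_sub_distrib, Finset.sum_const,
      hsum1, hsum2, nsmul_eq_mul]
    ring
  exact ⟨hfirst, by linarith [hfirst]⟩
end

section
/- Let E be a finite set, ℓ ≥ 1, and g : 2^E → ℝ monotone nondecreasing with g(∅) = 0 and submodularity ratio at least γ ∈ (0,1]. Let S ⊆ E × [ℓ] have pairwise distinct first coordinates, let (u,k) ∈ S, and let j ∈ [ℓ]. Then (ℓ/γ)·(1 + γ³/ℓ)^{ℓ}·(Φ_g(S − (u,k) + (u,j)) − Φ_g(S)) ≥ γ·Σ_{J⊆[ℓ], j∈J} α_{|J|}·(g(π_J(S) ∪ {u}) − g(π_J(S))) − Σ_{J⊆[ℓ], k∈J} α_{|J|}·(g(π_J(S)) − g(π_J(S)∖{u})). -/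
open Finset

lemma proj_insert_eq {E : Type*} [DecidableEq E] (T : Finset (E × ℕ)) (u : E) (j : ℕ)
    (J : Finset ℕ) :
    proj (insert (u, j) T) J = if j ∈ J then insert u (proj T J) else proj T J := by
  unfold proj
  by_cases h : j ∈ J <;> simp [Finset.filter_insert, h]

lemma proj_erase_eq {E : Type*} [DecidableEq E] (S : Finset (E × ℕ))
    (hdist : ∀ p ∈ S, ∀ q ∈ S, p.1 = q.1 → p = q) (u : E) (k : ℕ) (huk : (u, k) ∈ S)
    (J : Finset ℕ) :
    proj (S.erase (u, k)) J = if k ∈ J then (proj S J).erase u else proj S J := by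
  unfold proj
  rw [Finset.filter_erase]
  by_cases h : k ∈ J
  · simp only [h, if_true]
    ext x
    simp only [Finset.mem_image, Finset.mem_erase, Finset.mem_filter]
    constructor
    · rintro ⟨p, ⟨hp, hpS, hpJ⟩, rfl⟩
      refine ⟨fun hx => hp (hdist p hpS (u, k) huk hx), p, ⟨hpS, hpJ⟩, rfl⟩
    · rintro ⟨hxu, p, ⟨hpS, hpJ⟩, rfl⟩
      exact ⟨p, ⟨fun h' => hxu (by rw [h']), hpS, hpJ⟩, rfl⟩
  · simp only [h, if_false]
    congr 1
    apply Finset.erase_eq_of_notMem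
    simp [h]

lemma mem_proj_of_mem {E : Type*} [DecidableEq E] {S : Finset (E × ℕ)} {u : E} {k : ℕ}
    (huk : (u, k) ∈ S) {J : Finset ℕ} (hk : k ∈ J) : u ∈ proj S J := by
  unfold proj
  exact Finset.mem_image.2 ⟨(u, k), Finset.mem_filter.2 ⟨huk, hk⟩, rfl⟩

theorem stmt_11 {E : Type*} [Fintype E] [DecidableEq E] (ℓ : ℕ) (hℓ : 1 ≤ ℓ)
    (γ : ℝ) (hγ0 : 0 < γ) (hγ1 : γ ≤ 1)
    (g : Finset E → ℝ) (hempty : g ∅ = 0)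
    (hmono : ∀ A B : Finset E, A ⊆ B → g A ≤ g B)
    (hratio : ∀ T A : Finset E, T ⊆ A → ∀ e ∉ A,
      g (insert e T) - g T ≥ γ * (g (insert e A) - g A))
    (S : Finset (E × ℕ)) (hS : ∀ p ∈ S, p.2 ∈ Finset.Icc 1 ℓ)
    (hdist : ∀ p ∈ S, ∀ q ∈ S, p.1 = q.1 → p = q)
    (u : E) (k : ℕ) (huk : (u, k) ∈ S)
    (j : ℕ) (hj : j ∈ Finset.Icc 1 ℓ) :
    ((ℓ : ℝ) / γ) * (1 + γ ^ 3 / ℓ) ^ ℓ *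
        (Phi ℓ γ g (insert (u, j) (S.erase (u, k))) - Phi ℓ γ g S) ≥
      γ * (∑ J ∈ (Finset.Icc 1 ℓ).powerset.filter (fun J => j ∈ J),
          alphaCoef ℓ (γ ^ 3 / ℓ) J.card * (g (insert u (proj S J)) - g (proj S J))) -
      (∑ J ∈ (Finset.Icc 1 ℓ).powerset.filter (fun J => k ∈ J),
          alphaCoef ℓ (γ ^ 3 / ℓ) J.card * (g (proj S J) - g ((proj S J).erase u))) := by
  set c : ℝ := γ ^ 3 / ℓ with hc_def
  have hℓ0 : (0 : ℝ) < ℓ := by exact_mod_cast hℓ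
  have hc : 0 ≤ c := div_nonneg (by positivity) hℓ0.le
  have h1c : (0 : ℝ) < 1 + c := by linarith
  have hα : ∀ i : ℕ, 0 ≤ alphaCoef ℓ c i := by
    intro i
    unfold alphaCoef
    exact div_nonneg (pow_nonneg h1c.le _) (by positivity)
  set F := (Finset.Icc 1 ℓ).powerset.filter (fun J => J.Nonempty) with hF
  set S' := insert (u, j) (S.erase (u, k)) with hS'
  -- prefactor cancellation
  have hcancel : ((ℓ : ℝ) / γ) * (1 + c) ^ ℓ * (Phi ℓ γ g S' - Phi ℓ γ g S) =
      ∑ J ∈ F, alphaCoef ℓ c J.card * (g (proj S' J) - g (proj S J)) := by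
    unfold Phi
    rw [← hc_def, ← hF]
    have h1 : (1 + c) ^ (-(ℓ : ℤ)) = ((1 + c) ^ ℓ)⁻¹ := by
      rw [zpow_neg, zpow_natCast]
    rw [h1, ← mul_sub, ← Finset.sum_sub_distrib]
    simp only [← mul_sub]
    rw [← mul_assoc]
    have hne : ((1 + c) ^ ℓ)⁻¹ ≠ 0 := by positivity
    have : (ℓ : ℝ) / γ * (1 + c) ^ ℓ * (γ / ℓ * ((1 + c) ^ ℓ)⁻¹) = 1 := by
      field_simp
    rw [this, one_mul]
  rw [hcancel]
  -- rewrite RHS sums as sums over F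
  have hjW : j ∈ Finset.Icc 1 ℓ := hj
  have hkW : k ∈ Finset.Icc 1 ℓ := hS (u, k) huk
  have rw_sum : ∀ (m : ℕ), m ∈ Finset.Icc 1 ℓ → ∀ f : Finset ℕ → ℝ,
      (∑ J ∈ (Finset.Icc 1 ℓ).powerset.filter (fun J => m ∈ J), f J) =
      ∑ J ∈ F, (if m ∈ J then f J else 0) := by
    intro m hm f
    rw [Finset.sum_filter]
    rw [hF, Finset.sum_filter]
    apply Finset.sum_congr rfl
    intro J _
    by_cases hmJ : m ∈ J
    · simp [hmJ, Finset.nonempty_of_ne_empty, Finset.ne_empty_of_mem hmJ,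
        Finset.nonempty_iff_ne_empty]
    · simp [hmJ]
  rw [rw_sum j hjW, rw_sum k hkW, Finset.mul_sum, ← Finset.sum_sub_distrib]
  apply Finset.sum_le_sum
  intro J hJ
  have hJsub : J ⊆ Finset.Icc 1 ℓ := by
    rw [hF] at hJ
    exact Finset.mem_powerset.1 (Finset.mem_filter.1 hJ).1
  have hproj : proj S' J =
      if j ∈ J then insert u (if k ∈ J then (proj S J).erase u else proj S J)
      else if k ∈ J then (proj S J).erase u else proj S J := by
    rw [hS', proj_insert_eq, proj_erase_eq S hdist u k huk]
  set α := alphaCoef ℓ c J.card with hα_def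
  have hα0 : 0 ≤ α := hα J.card
  by_cases hjJ : j ∈ J <;> by_cases hkJ : k ∈ J
  · -- both: u ∈ proj S J, insert u (erase u π) = π, and insert u π = π
    have hu : u ∈ proj S J := mem_proj_of_mem huk hkJ
    have h1 : proj S' J = proj S J := by
      rw [hproj]; simp [hjJ, hkJ, Finset.insert_erase hu]
    have h2 : insert u (proj S J) = proj S J := Finset.insert_eq_self.2 hu
    rw [h1, h2]
    simp only [hjJ, hkJ, if_true, sub_self, mul_zero]
    have : 0 ≤ α * (g (proj S J) - g ((proj S J).erase u)) :=
      mul_nonneg hα0 (by linarith [hmono _ _ (Finset.erase_subset u (proj S J))])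
    linarith
  · -- j ∈ J, k ∉ J
    have h1 : proj S' J = insert u (proj S J) := by
      rw [hproj]; simp [hjJ, hkJ]
    rw [h1]
    simp only [hjJ, hkJ, if_true, if_false, sub_zero]
    have hΔ : 0 ≤ g (insert u (proj S J)) - g (proj S J) := by
      linarith [hmono _ _ (Finset.subset_insert u (proj S J))]
    have := mul_le_mul_of_nonneg_right hγ1 (mul_nonneg hα0 hΔ)
    nlinarith
  · -- j ∉ J, k ∈ J
    have h1 : proj S' J = (proj S J).erase u := by
      rw [hproj]; simp [hjJ, hkJ]
    rw [h1]
    simp only [hjJ, hkJ, if_true, if_false]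
    ring_nf
    linarith
  · have h1 : proj S' J = proj S J := by
      rw [hproj]; simp [hjJ, hkJ]
    rw [h1]
    simp [hjJ, hkJ]
end

section
/- Let f : 2^E → ℝ be a monotone nondecreasing submodular function on a finite ground set E with f(∅) = 0 and nonnegative values, and let κ ∈ [0,1] be such that f(A ∪ {e}) − f(A) ≥ (1 − κ)·f({e}) for all A ⊆ E and e ∉ A. Define l(A) = (1 − κ)·Σ_{e∈A} f({e}) and g = f − l. Then g is monotone nondecreasing, nonnegative, and submodular, and moreover g(A) ≤ κ·f(A) for every A ⊆ E. -/
/-! Subtracting the modular function `l` keeps `f` submodular, and the curvature hypothesis says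
precisely that the marginal gains of `g = f - l` are nonnegative, so `g` is monotone and hence
nonnegative. The bound `g ≤ κ f` is `(1 - κ)` times the subadditivity `f A ≤ ∑ e ∈ A, f {e}`,
which holds for every submodular `f` with `f ∅ = 0`. -/

open Finset

section Lattice

variable {α β : Type*} [Lattice α] [AddCommGroup β] [PartialOrder β] [IsOrderedAddMonoid β]

def IsSubmodular (f : α → β) : Prop :=
  ∀ a b, f (a ⊔ b) + f (a ⊓ b) ≤ f a + f b

theorem IsSubmodular.sub_of_modular {f l : α → β} (hf : IsSubmodular f)
    (hl : ∀ a b, l (a ⊔ b) + l (a ⊓ b) = l a + l b) : IsSubmodular (f - l) := by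
  intro a b
  simp only [Pi.sub_apply]
  rw [sub_add_sub_comm, sub_add_sub_comm, hl]
  exact sub_le_sub_right (hf a b) _

end Lattice

section Finset

variable {E β : Type*} [DecidableEq E] [AddCommGroup β] [PartialOrder β] [IsOrderedAddMonoid β]

theorem IsSubmodular.sub_sum {f : Finset E → β} (hf : IsSubmodular f) (w : E → β) :
    IsSubmodular fun A ↦ f A - ∑ e ∈ A, w e :=
  hf.sub_of_modular (l := fun A ↦ ∑ e ∈ A, w e) fun _ _ ↦ sum_union_inter

theorem IsSubmodular.le_sum_singleton {f : Finset E → β} (hf : IsSubmodular f) (h0 : f ∅ = 0)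
    (A : Finset E) : f A ≤ ∑ e ∈ A, f {e} := by
  induction A using Finset.induction_on with
  | empty => simp [h0]
  | insert a s ha ih =>
    have hdisj : ({a} : Finset E) ∩ s = ∅ := singleton_inter_of_notMem ha
    calc f (insert a s) = f ({a} ∪ s) + f ({a} ∩ s) := by rw [hdisj, h0, add_zero, insert_eq]
      _ ≤ f {a} + f s := hf {a} s
      _ ≤ ∑ e ∈ insert a s, f {e} := by rw [sum_insert ha]; exact add_le_add_right ih _

theorem monotone_sub_sum_of_le_marginal {f : Finset E → β} {w : E → β}
    (hw : ∀ A e, e ∉ A → w e ≤ f (insert e A) - f A) :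
    Monotone fun A ↦ f A - ∑ e ∈ A, w e := by
  refine monotone_iff_forall_le_insert.mpr fun A e he ↦ ?_
  rw [sum_insert he, sub_add_eq_sub_sub_swap, sub_right_comm, sub_le_sub_iff_right, le_sub_comm]
  exact hw A e he

end Finset

theorem stmt_16_general {E : Type*} [DecidableEq E]
    (f : Finset E → ℝ)
    (hsub : ∀ A B : Finset E, f A + f B ≥ f (A ∪ B) + f (A ∩ B))
    (hempty : f ∅ = 0)
    (κ : ℝ) (hκ1 : κ ≤ 1)
    (hcurv : ∀ A : Finset E, ∀ e ∉ A, f (insert e A) - f A ≥ (1 - κ) * f {e})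
    (l : Finset E → ℝ) (hl : ∀ A : Finset E, l A = (1 - κ) * ∑ e ∈ A, f {e})
    (g : Finset E → ℝ) (hg : ∀ A : Finset E, g A = f A - l A) :
    (∀ A B : Finset E, A ⊆ B → g A ≤ g B) ∧
    (∀ A : Finset E, 0 ≤ g A) ∧
    (∀ A B : Finset E, g A + g B ≥ g (A ∪ B) + g (A ∩ B)) ∧
    (∀ A : Finset E, g A ≤ κ * f A) := by
  have hg_eq : g = fun A ↦ f A - ∑ e ∈ A, (1 - κ) * f {e} := funext fun A ↦ by rw [hg, hl, mul_sum]
  subst hg_eq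
  have hf : IsSubmodular f := hsub
  have hg_mono := monotone_sub_sum_of_le_marginal hcurv
  refine ⟨fun _ _ h ↦ hg_mono h, fun A ↦ ?_, hf.sub_sum _, fun A ↦ ?_⟩
  · simpa [hempty] using hg_mono (empty_subset A)
  · have hscaled := mul_le_mul_of_nonneg_left (hf.le_sum_singleton hempty A) (sub_nonneg.mpr hκ1)
    rw [mul_sum] at hscaled
    linarith

theorem stmt_16 {E : Type*} [Fintype E] [DecidableEq E]
    (f : Finset E → ℝ)
    (hmono : ∀ A B : Finset E, A ⊆ B → f A ≤ f B)
    (hsub : ∀ A B : Finset E, f A + f B ≥ f (A ∪ B) + f (A ∩ B))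
    (hempty : f ∅ = 0) (hnonneg : ∀ A : Finset E, 0 ≤ f A)
    (κ : ℝ) (hκ0 : 0 ≤ κ) (hκ1 : κ ≤ 1)
    (hcurv : ∀ A : Finset E, ∀ e ∉ A, f (insert e A) - f A ≥ (1 - κ) * f {e})
    (l : Finset E → ℝ) (hl : ∀ A : Finset E, l A = (1 - κ) * ∑ e ∈ A, f {e})
    (g : Finset E → ℝ) (hg : ∀ A : Finset E, g A = f A - l A) :
    (∀ A B : Finset E, A ⊆ B → g A ≤ g B) ∧
    (∀ A : Finset E, 0 ≤ g A) ∧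
    (∀ A B : Finset E, g A + g B ≥ g (A ∪ B) + g (A ∩ B)) ∧
    (∀ A : Finset E, g A ≤ κ * f A) :=
  stmt_16_general f hsub hempty κ hκ1 hcurv l hl g hg
end
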